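/- The R-submodule of 𝒜 spanned by the set {e_(0,0)} ∪ {e_v + e_(−v) : v ∈ ℤ × ℤ, v ≠ (0,0)} contains 1 and is closed under the multiplication of 𝒜; hence it is an R-subalgebra of 𝒜. (In the paper this is the subalgebra 𝒜^Θ of Θ-invariant elements, which Theorem 4.1 shows is isomorphic as an R-algebra, via the map ψ sending an unoriented multicurve to the sum of all its orientations, to the Kauffman bracket skein algebra of the torus.) -/

import Mathlib

open Finsupp LaurentPolynomial

noncomputable section

/-- `R = ℤ[A,A⁻¹]`, the ring of Laurent polynomials over `ℤ`; `A = LaurentPolynomial.T 1`. -/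
abbrev R := LaurentPolynomial ℤ

/-- The determinant pairing `D (a,b) (c,d) = a*d - b*c`. -/
def D (v w : ℤ × ℤ) : ℤ := v.1 * w.2 - v.2 * w.1

/-- The unique `R`-bilinear multiplication on the free `R`-module `(ℤ × ℤ) →₀ R` with
`e_v * e_w = A^(-(D v w)) • e_(v+w)` on basis vectors. -/
def mulF : ((ℤ × ℤ) →₀ R) →ₗ[R] ((ℤ × ℤ) →₀ R) →ₗ[R] ((ℤ × ℤ) →₀ R) :=
  Finsupp.lsum R fun v : ℤ × ℤ => LinearMap.toSpanSingleton R _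
    (Finsupp.lsum R fun w : ℤ × ℤ => LinearMap.toSpanSingleton R _
      (Finsupp.single (v + w) (T (-(D v w)))))

lemma mulF_single_single (v w : ℤ × ℤ) (r s : R) :
    mulF (Finsupp.single v r) (Finsupp.single w s) =
      Finsupp.single (v + w) (r * s * T (-(D v w))) := by
  rw [mulF, Finsupp.lsum_single, LinearMap.toSpanSingleton_apply, LinearMap.smul_apply,
    Finsupp.lsum_single, LinearMap.toSpanSingleton_apply, Finsupp.smul_single,
    Finsupp.smul_single, smul_eq_mul, smul_eq_mul, ← mul_assoc]

lemma mulF_assoc (x y z : (ℤ × ℤ) →₀ R) : mulF (mulF x y) z = mulF x (mulF y z) := by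
  induction x using Finsupp.induction_linear with
  | zero => simp only [map_zero, LinearMap.zero_apply]
  | add a b ha hb => simp only [map_add, LinearMap.add_apply, ha, hb]
  | single v r =>
    induction y using Finsupp.induction_linear with
    | zero => simp only [map_zero, LinearMap.zero_apply, LinearMap.map_zero]
    | add a b ha hb => simp only [map_add, LinearMap.add_apply, LinearMap.map_add, ha, hb]
    | single w s =>
      induction z using Finsupp.induction_linear with
      | zero => simp only [map_zero, LinearMap.map_zero]
      | add a b ha hb => simp only [map_add, LinearMap.map_add, ha, hb]
      | single u t =>
        rw [mulF_single_single, mulF_single_single, mulF_single_single,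
          mulF_single_single, add_assoc]
        congr 1
        have h : (T (-(D v w)) : R) * T (-(D (v + w) u)) =
            T (-(D w u)) * T (-(D v (w + u))) := by
          rw [← T_add, ← T_add]
          congr 1
          simp only [D, Prod.fst_add, Prod.snd_add]
          ring
        linear_combination (r * s * t) * h

lemma mulF_one_left (x : (ℤ × ℤ) →₀ R) :
    mulF (Finsupp.single (0 : ℤ × ℤ) (1 : R)) x = x := by
  induction x using Finsupp.induction_linear with
  | zero => simp only [LinearMap.map_zero]
  | add a b ha hb => simp only [LinearMap.map_add, ha, hb]
  | single w s =>
      rw [mulF_single_single]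
      have h : D (0 : ℤ × ℤ) w = 0 := by simp [D]
      rw [h, neg_zero, T_zero, mul_one, one_mul, zero_add]

lemma mulF_one_right (x : (ℤ × ℤ) →₀ R) :
    mulF x (Finsupp.single (0 : ℤ × ℤ) (1 : R)) = x := by
  induction x using Finsupp.induction_linear with
  | zero => simp only [map_zero, LinearMap.zero_apply]
  | add a b ha hb => simp only [map_add, LinearMap.add_apply, ha, hb]
  | single w s =>
      rw [mulF_single_single]
      have h : D w (0 : ℤ × ℤ) = 0 := by simp [D]
      rw [h, neg_zero, T_zero, mul_one, mul_one, add_zero]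

/-- The oriented skein module `𝒜` of the torus: the free `R`-module `(ℤ × ℤ) →₀ R`. -/
def 𝒜 : Type := (ℤ × ℤ) →₀ R

instance : AddCommGroup 𝒜 := inferInstanceAs (AddCommGroup ((ℤ × ℤ) →₀ R))
instance : Module R 𝒜 := inferInstanceAs (Module R ((ℤ × ℤ) →₀ R))

/-- `𝒜` as an associative unital ring, with the multiplication determined by
`e_v * e_w = A^(-(D v w)) • e_(v+w)`. -/
instance : Ring 𝒜 :=
  { (inferInstance : AddCommGroup 𝒜) with
    mul := fun x y => mulF x y
    one := Finsupp.single (0 : ℤ × ℤ) (1 : R)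
    mul_assoc := mulF_assoc
    one_mul := mulF_one_left
    mul_one := mulF_one_right
    left_distrib := fun a b c => LinearMap.map_add (mulF a) b c
    right_distrib := fun a b c => by
      show mulF (a + b) c = mulF a c + mulF b c
      exact LinearMap.map_add₂ mulF a b c
    zero_mul := fun a => by show mulF 0 a = 0; exact LinearMap.map_zero₂ mulF a
    mul_zero := fun a => by show mulF a 0 = 0; rw [LinearMap.map_zero] }

/-- `𝒜` as an `R`-algebra. -/
instance : Algebra R 𝒜 :=
  Algebra.ofModule
    (fun r x y => by
      show mulF (r • x) y = r • mulF x y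
      exact LinearMap.map_smul₂ mulF r x y)
    (fun r x y => by
      show mulF x (r • y) = r • mulF x y
      exact map_smul (mulF x) r y)

/-- The basis element `e_v` of `𝒜` (the oriented multicurve class `γ_v`). -/
def e (v : ℤ × ℤ) : 𝒜 := Finsupp.single v 1

/-- The multiplication of `𝒜` on the basis: `e_v * e_w = A^(-(D v w)) • e_(v+w)`. -/
lemma e_mul_e (v w : ℤ × ℤ) : e v * e w = (T (-(D v w)) : R) • e (v + w) := by
  show mulF (Finsupp.single v 1) (Finsupp.single w 1) =
    (T (-(D v w)) : R) • (Finsupp.single (v + w) (1 : R))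
  rw [mulF_single_single, one_mul, one_mul, Finsupp.smul_single, smul_eq_mul, mul_one]

lemma one_def : (1 : 𝒜) = e (0, 0) := rfl

open scoped Pointwise

theorem Submodule.mul_mem_span_of_mul_subset {K A : Type*} [CommSemiring K] [Semiring A]
    [Algebra K A] {S : Set A} (hS : S * S ⊆ Submodule.span K S) {x y : A}
    (hx : x ∈ Submodule.span K S) (hy : y ∈ Submodule.span K S) :
    x * y ∈ Submodule.span K S :=
  Submodule.span_le.mpr hS (Submodule.span_mul_span K S S ▸ Submodule.mul_mem_mul hx hy)

lemma D_neg_left (v w : ℤ × ℤ) : D (-v) w = -D v w := by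
  simp only [D, Prod.fst_neg, Prod.snd_neg]; ring

lemma D_neg_right (v w : ℤ × ℤ) : D v (-w) = -D v w := by
  simp only [D, Prod.fst_neg, Prod.snd_neg]; ring

lemma e_zero_mul (x : 𝒜) : e (0, 0) * x = x := by
  rw [← one_def, one_mul]

lemma mul_e_zero (x : 𝒜) : x * e (0, 0) = x := by
  rw [← one_def, mul_one]

lemma e_add_e_neg_mul (v w : ℤ × ℤ) :
    (e v + e (-v)) * (e w + e (-w)) =
      (T (-D v w) : R) • (e (v + w) + e (-(v + w))) +
        (T (D v w) : R) • (e (v - w) + e (-(v - w))) := by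
  simp only [add_mul, mul_add, e_mul_e, D_neg_left, D_neg_right, neg_neg]
  rw [neg_add, neg_sub, sub_eq_add_neg, neg_add_eq_sub, ← sub_eq_add_neg, smul_add, smul_add]
  abel

def symmGens : Set 𝒜 := {e (0, 0)} ∪ {y : 𝒜 | ∃ v : ℤ × ℤ, v ≠ (0, 0) ∧ y = e v + e (-v)}

lemma e_add_e_neg_mem_span (v : ℤ × ℤ) : e v + e (-v) ∈ Submodule.span R symmGens := by
  by_cases hv : v = (0, 0)
  · subst hv
    rw [show -((0, 0) : ℤ × ℤ) = (0, 0) from neg_zero, ← two_smul R]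
    exact Submodule.smul_mem _ _ (Submodule.subset_span (Or.inl rfl))
  · exact Submodule.subset_span (Or.inr ⟨v, hv, rfl⟩)

lemma symmGens_mul_subset_span : symmGens * symmGens ⊆ Submodule.span R symmGens := by
  refine Set.mul_subset_iff.mpr fun a ha b hb => ?_
  rcases ha with rfl | ⟨v, -, rfl⟩
  · rw [e_zero_mul]; exact Submodule.subset_span hb
  rcases hb with rfl | ⟨w, -, rfl⟩
  · rw [mul_e_zero]; exact e_add_e_neg_mem_span v
  rw [e_add_e_neg_mul]
  exact add_mem (Submodule.smul_mem _ _ (e_add_e_neg_mem_span _))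
    (Submodule.smul_mem _ _ (e_add_e_neg_mem_span _))

/-- The `R`-span of `e (0,0)` and the symmetrized elements `e v + e (-v)` (`v ≠ (0,0)`)
contains `1` and is closed under the multiplication of `𝒜`; hence it is an `R`-subalgebra
(the subalgebra `𝒜^Θ` of `Θ`-invariant elements). -/
theorem symm_span_subalgebra :
    (1 : 𝒜) ∈ Submodule.span R
        ({e (0, 0)} ∪ {y : 𝒜 | ∃ v : ℤ × ℤ, v ≠ (0, 0) ∧ y = e v + e (-v)}) ∧
      ∀ x y : 𝒜,
        x ∈ Submodule.span R
            ({e (0, 0)} ∪ {y : 𝒜 | ∃ v : ℤ × ℤ, v ≠ (0, 0) ∧ y = e v + e (-v)}) →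
        y ∈ Submodule.span R
            ({e (0, 0)} ∪ {y : 𝒜 | ∃ v : ℤ × ℤ, v ≠ (0, 0) ∧ y = e v + e (-v)}) →
        x * y ∈ Submodule.span R
            ({e (0, 0)} ∪ {y : 𝒜 | ∃ v : ℤ × ℤ, v ≠ (0, 0) ∧ y = e v + e (-v)}) := by
  exact ⟨Submodule.subset_span (Or.inl one_def), fun _ _ =>
    Submodule.mul_mem_span_of_mul_subset symmGens_mul_subset_span⟩

end
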